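/- For every integer n ≥ 6, β_b(C(n;1,3)) = α(C(n;1,3)) = n/2 if n is even, and (n−3)/2 if n is odd. -/

import Mathlib

/-- The eccentricity of a vertex: maximum distance to any other vertex. -/
noncomputable def eccent {V : Type*} [Fintype V] (G : SimpleGraph V) (v : V) : ℕ :=
  Finset.univ.sup (fun u => G.dist v u)

/-- The diameter of a finite graph: maximum eccentricity. -/
noncomputable def graphDiam {V : Type*} [Fintype V] (G : SimpleGraph V) : ℕ :=
  Finset.univ.sup (fun v => eccent G v)

/-- `f` is an independent broadcast on `G`. -/
def IsIndepBroadcast {V : Type*} [Fintype V] (G : SimpleGraph V) (f : V → ℕ) : Prop :=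
  (∀ v, f v ≤ eccent G v) ∧
  ∀ u v : V, u ≠ v → 0 < f u → 0 < f v → max (f u) (f v) < G.dist u v

/-- The broadcast independence number: maximum cost of an independent broadcast. -/
noncomputable def betaB {V : Type*} [Fintype V] (G : SimpleGraph V) : ℕ :=
  sSup {k | ∃ f : V → ℕ, IsIndepBroadcast G f ∧ ∑ v, f v = k}

/-- The independence number: maximum size of an independent set. -/
noncomputable def alphaNum {V : Type*} [Fintype V] (G : SimpleGraph V) : ℕ :=
  sSup {k | ∃ s : Finset V, (∀ u ∈ s, ∀ v ∈ s, ¬ G.Adj u v) ∧ s.card = k}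

/-- The circulant graph `C(n;1,a)` on vertices `v_0,…,v_{n-1}` with edges
`v_i v_{i+1}` and `v_i v_{i+a}`, indices mod `n`. -/
def circulantGraph (n a : ℕ) : SimpleGraph (Fin n) :=
  SimpleGraph.fromRel (fun i j => (i.val + 1) % n = j.val ∨ (i.val + a) % n = j.val)

/-!
For an independent broadcast `f`, every broadcasting vertex `v` owns the arc
`v, v + 1, …, v + 3 f(v) - 2`. Since `dist(u, u + d) ≤ ⌊d/3⌋ + (d mod 3)`, a second broadcasting
vertex inside the arc of `u` would lie within distance `f(u)` of `u`; so the arcs are disjoint and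
`∑ (3 f(v) - 1) ≤ n`, i.e. `2 ∑ f + E ≤ n` for the excess `E = ∑ (f(v) - 1)`. This gives
`2 ∑ f ≤ n`. For odd `n`, parity gives `2 ∑ f ≤ n - 3` once `E ≥ 2`. Otherwise either a vertex `w`
with `f(w) ≥ 2` is the strict maximum of `f`, and then `w - 1` lies in no arc; or `f ≤ 1`, the
support is independent, and an independent set `s` with `2|s| = n - 1` is impossible: `s ∪ (s + 1)`
misses a single vertex `u`, which forces the adjacent vertices `u - 2` and `u + 1` into `s`.

Conversely `v_0, v_2, v_4, …` (stopping before `v_{n-3}` for odd `n`) is independent, and the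
indicator of an independent set is an independent broadcast, so both `α` and `β_b` attain the bound.
-/

open Finset

section IndepBroadcast

variable {V : Type*} [Fintype V] {G : SimpleGraph V}

def broadcastSupport (f : V → ℕ) : Finset V := {v | 0 < f v}

lemma mem_broadcastSupport {f : V → ℕ} {v : V} : v ∈ broadcastSupport f ↔ 0 < f v := by
  simp [broadcastSupport]

lemma sum_broadcastSupport_eq {f g : V → ℕ} (hg : ∀ v, f v = 0 → g v = 0) :
    ∑ v ∈ broadcastSupport f, g v = ∑ v, g v :=
  sum_filter_of_ne fun v _ hv => Nat.pos_of_ne_zero fun h => hv (hg v h)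

lemma sum_eq_card_broadcastSupport_add (f : V → ℕ) :
    ∑ v, f v = #(broadcastSupport f) + ∑ v, (f v - 1) := by
  rw [← sum_broadcastSupport_eq (fun _ h => h),
    ← sum_broadcastSupport_eq (f := f) (g := (f · - 1)) (fun v h => show f v - 1 = 0 by omega),
    card_eq_sum_ones, ← sum_add_distrib]
  exact sum_congr rfl fun v hv => (Nat.add_sub_cancel' (mem_broadcastSupport.mp hv)).symm

lemma IsIndepBroadcast.not_adj {f : V → ℕ} (hf : IsIndepBroadcast G f) {u v : V}
    (hu : u ∈ broadcastSupport f) (hv : v ∈ broadcastSupport f) : ¬ G.Adj u v := by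
  intro hadj
  have hfu := mem_broadcastSupport.mp hu
  have := hf.2 u v hadj.ne hfu (mem_broadcastSupport.mp hv)
  rw [SimpleGraph.dist_eq_one_iff_adj.mpr hadj] at this
  omega

variable [Nontrivial V]

lemma one_le_eccent (hG : G.Connected) (v : V) : 1 ≤ eccent G v := by
  obtain ⟨u, hu⟩ := exists_ne v
  exact (hG.pos_dist_of_ne hu.symm).trans_le (le_sup (f := G.dist v) (mem_univ u))

lemma isIndepBroadcast_indicator [DecidableEq V] (hG : G.Connected) {s : Finset V}
    (hs : ∀ u ∈ s, ∀ v ∈ s, ¬ G.Adj u v) :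
    IsIndepBroadcast G (fun v => if v ∈ s then 1 else 0) := by
  refine ⟨fun v => ?_, fun u v huv hu hv => ?_⟩
  · dsimp only
    split_ifs
    exacts [one_le_eccent hG v, Nat.zero_le _]
  · simp only [ite_eq_right_iff, one_ne_zero, imp_false, not_not, pos_iff_ne_zero, ne_eq] at hu hv
    have hpos := hG.pos_dist_of_ne huv
    have hne : G.dist u v ≠ 1 := fun h => hs u hu v hv (SimpleGraph.dist_eq_one_iff_adj.mp h)
    simp only [hu, hv, if_true, max_self]
    omega

lemma betaB_eq_and_alphaNum_eq [DecidableEq V] (hG : G.Connected) {m : ℕ}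
    (hub : ∀ f, IsIndepBroadcast G f → ∑ v, f v ≤ m) {s : Finset V}
    (hs : ∀ u ∈ s, ∀ v ∈ s, ¬ G.Adj u v) (hcard : #s = m) :
    betaB G = m ∧ alphaNum G = m := by
  have sum_indicator (t : Finset V) : ∑ v, (if v ∈ t then 1 else 0) = #t := by
    simp [sum_ite_mem]
  refine ⟨IsGreatest.csSup_eq ⟨⟨_, isIndepBroadcast_indicator hG hs, ?_⟩, ?_⟩,
    IsGreatest.csSup_eq ⟨⟨s, hs, hcard⟩, ?_⟩⟩
  · rw [sum_indicator, hcard]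
  · rintro k ⟨f, hf, rfl⟩
    exact hub f hf
  · rintro k ⟨t, ht, rfl⟩
    simpa only [sum_indicator] using hub _ (isIndepBroadcast_indicator hG ht)

end IndepBroadcast

lemma SimpleGraph.exists_walk_add_nsmul {α : Type*} [AddMonoid α] {G : SimpleGraph α} {c : α}
    (h : ∀ x, G.Adj x (x + c)) (u : α) (k : ℕ) :
    ∃ p : G.Walk u (u + k • c), p.length = k := by
  induction k with
  | zero => exact ⟨SimpleGraph.Walk.nil.copy rfl (by simp), by simp⟩
  | succ k ih =>
    obtain ⟨p, hp⟩ := ih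
    exact ⟨(p.concat (h _)).copy rfl (by rw [succ_nsmul, add_assoc]), by simp [hp]⟩

lemma SimpleGraph.dist_add_nsmul_le {α : Type*} [AddMonoid α] {G : SimpleGraph α} {c : α}
    (h : ∀ x, G.Adj x (x + c)) (u : α) (k : ℕ) : G.dist u (u + k • c) ≤ k := by
  obtain ⟨p, hp⟩ := G.exists_walk_add_nsmul h u k
  exact (SimpleGraph.dist_le p).trans hp.le

section Circulant

open Fin.NatCast Fin.CommRing

variable {n : ℕ} [NeZero n]

lemma Fin.val_add_natCast_eq_or (u : Fin n) {c : ℕ} (hc : c < n) :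
    ((u + c : Fin n) : ℕ) = u + c ∨ ((u + c : Fin n) : ℕ) + n = u + c := by
  rw [Fin.val_add, Fin.val_natCast, Nat.mod_eq_of_lt hc]
  rcases lt_or_ge ((u : ℕ) + c) n with h | h
  · exact .inl (Nat.mod_eq_of_lt h)
  · rw [Nat.mod_eq_sub_mod h, Nat.mod_eq_of_lt (by omega)]
    omega

lemma Fin.eq_of_natCast_eq_of_lt {i j : ℕ} (hi : i < n) (hj : j < n) (h : (i : Fin n) = j) :
    i = j := by
  simpa [Fin.ext_iff, Fin.val_natCast, Nat.mod_eq_of_lt hi, Nat.mod_eq_of_lt hj] using h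

lemma Fin.self_ne_add_natCast (u : Fin n) {c : ℕ} (hc0 : 0 < c) (hcn : c < n) : u ≠ u + c := by
  intro h
  have hdvd : n ∣ c := Fin.natCast_eq_zero.mp (left_eq_add.mp h)
  exact absurd (Nat.le_of_dvd hc0 hdvd) (by omega)

lemma circulantGraph_adj_iff (a : ℕ) (u v : Fin n) :
    (circulantGraph n a).Adj u v ↔
      u ≠ v ∧ (v = u + 1 ∨ v = u + a ∨ u = v + 1 ∨ u = v + a) := by
  simp only [circulantGraph, SimpleGraph.fromRel_adj, Fin.ext_iff, Fin.val_add, Fin.val_natCast,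
    Fin.val_one', Nat.add_mod_mod, eq_comm (a := (v : ℕ)), eq_comm (a := (u : ℕ))]
  tauto

lemma circulantGraph_adj_add_one (hn : 2 ≤ n) (a : ℕ) (u : Fin n) :
    (circulantGraph n a).Adj u (u + 1) :=
  (circulantGraph_adj_iff a u _).mpr ⟨by simpa using u.self_ne_add_natCast one_pos hn, .inl rfl⟩

lemma circulantGraph_adj_add {a : ℕ} (ha : 0 < a) (han : a < n) (u : Fin n) :
    (circulantGraph n a).Adj u (u + a) :=
  (circulantGraph_adj_iff a u _).mpr ⟨u.self_ne_add_natCast ha han, .inr (.inl rfl)⟩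

lemma circulantGraph_connected (hn : 2 ≤ n) (a : ℕ) : (circulantGraph n a).Connected := by
  refine (SimpleGraph.connected_iff_exists_forall_reachable _).mpr ⟨0, fun v => ?_⟩
  obtain ⟨p, -⟩ :=
    (circulantGraph n a).exists_walk_add_nsmul (circulantGraph_adj_add_one hn a) 0 v
  exact ⟨p.copy rfl (by simp)⟩

lemma circulantGraph_dist_add_le (hn : 4 ≤ n) (u : Fin n) (d : ℕ) :
    (circulantGraph n 3).dist u (u + d) ≤ d / 3 + d % 3 := by
  have hsplit : u + (d : Fin n) = u + (d / 3) • (3 : ℕ) + (d % 3) • 1 := by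
    conv_lhs => rw [← Nat.div_add_mod d 3]
    simp only [nsmul_eq_mul, mul_one]
    push_cast
    ring
  rw [hsplit]
  calc _ ≤ _ := (circulantGraph_connected (by omega) 3).dist_triangle
    _ ≤ d / 3 + d % 3 := add_le_add
        (SimpleGraph.dist_add_nsmul_le (circulantGraph_adj_add (by norm_num) (by omega)) _ _)
        (SimpleGraph.dist_add_nsmul_le (circulantGraph_adj_add_one (by omega) 3) _ _)

lemma circulantGraph_three_mul_dist_le (hn : 6 ≤ n) (u v : Fin n) :
    3 * (circulantGraph n 3).dist u v ≤ n := by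
  set d := ((v - u : Fin n) : ℕ)
  have hd : d < n := (v - u).isLt
  have hv : v = u + d := by simp [d]
  have hu : u = v + (n - d : ℕ) := by
    rw [Nat.cast_sub hd.le, Fin.natCast_self, hv]
    ring
  rcases le_or_gt d (n / 2) with h | h
  · have := circulantGraph_dist_add_le (by omega) u d
    rw [← hv] at this
    omega
  · have := circulantGraph_dist_add_le (by omega) v (n - d)
    rw [← hu, SimpleGraph.dist_comm] at this
    omega

variable {f : Fin n → ℕ}

lemma IsIndepBroadcast.three_mul_le (hn : 6 ≤ n)
    (hf : IsIndepBroadcast (circulantGraph n 3) f) (v : Fin n) : 3 * f v ≤ n := by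
  have : eccent (circulantGraph n 3) v ≤ n / 3 :=
    Finset.sup_le fun u _ => by have := circulantGraph_three_mul_dist_le hn v u; omega
  have := hf.1 v
  omega

lemma IsIndepBroadcast.max_lt_of_eq_add (hn : 4 ≤ n)
    (hf : IsIndepBroadcast (circulantGraph n 3) f) {u v : Fin n} (hu : u ∈ broadcastSupport f)
    (hv : v ∈ broadcastSupport f) (huv : u ≠ v) {d : ℕ} (h : v = u + d) :
    max (f u) (f v) < d / 3 + d % 3 :=
  (hf.2 u v huv (mem_broadcastSupport.mp hu) (mem_broadcastSupport.mp hv)).trans_le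
    (h ▸ circulantGraph_dist_add_le hn u d)

def arc (v : Fin n) (m : ℕ) : Finset (Fin n) := (range m).image fun i : ℕ => v + (i : Fin n)

lemma mem_arc {v x : Fin n} {m : ℕ} : x ∈ arc v m ↔ ∃ i < m, v + i = x := by
  simp [arc]

lemma card_arc (v : Fin n) {m : ℕ} (hm : m ≤ n) : #(arc v m) = m := by
  rw [arc, card_image_of_injOn, card_range]
  intro i hi j hj hij
  simp only [coe_range, Set.mem_Iio] at hi hj
  exact Fin.eq_of_natCast_eq_of_lt (by omega) (by omega) (add_left_cancel hij)

def arcCover (f : Fin n → ℕ) : Finset (Fin n) :=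
  (broadcastSupport f).biUnion fun v => arc v (3 * f v - 1)

lemma IsIndepBroadcast.disjoint_arc (hn : 4 ≤ n)
    (hf : IsIndepBroadcast (circulantGraph n 3) f) {u v : Fin n} (hu : u ∈ broadcastSupport f)
    (hv : v ∈ broadcastSupport f) (huv : u ≠ v) :
    Disjoint (arc u (3 * f u - 1)) (arc v (3 * f v - 1)) := by
  suffices key : ∀ a ∈ broadcastSupport f, ∀ b ∈ broadcastSupport f, a ≠ b →
      ∀ i < 3 * f a - 1, ∀ j ≤ i, a + i ≠ b + j by
    refine disjoint_left.mpr fun x hxu hxv => ?_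
    obtain ⟨i, hi, rfl⟩ := mem_arc.mp hxu
    obtain ⟨j, hj, hji⟩ := mem_arc.mp hxv
    rcases le_total j i with h | h
    · exact key u hu v hv huv i hi j h hji.symm
    · exact key v hv u hu huv.symm j hj i h hji
  intro a ha b hb hab i hi j hji heq
  have hb' : b = a + (i - j : ℕ) := by
    rw [Nat.cast_sub hji]
    linear_combination -heq
  rcases Nat.eq_or_lt_of_le hji with rfl | hlt
  · exact hab (by simpa using hb'.symm)
  · have := hf.max_lt_of_eq_add (by omega) ha hb hab hb'
    omega

lemma IsIndepBroadcast.card_arcCover_add_card (hn : 6 ≤ n)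
    (hf : IsIndepBroadcast (circulantGraph n 3) f) :
    #(arcCover f) + #(broadcastSupport f) = 3 * ∑ v, f v := by
  rw [arcCover, card_biUnion fun u hu v hv huv => hf.disjoint_arc (by omega) hu hv huv,
    sum_congr rfl fun v _ => card_arc v (by have := hf.three_mul_le hn v; omega),
    card_eq_sum_ones, ← sum_add_distrib, ← sum_broadcastSupport_eq (fun _ h => h), mul_sum]
  refine sum_congr rfl fun v hv => ?_
  have := mem_broadcastSupport.mp hv
  omega

lemma IsIndepBroadcast.three_mul_sum_le (hn : 6 ≤ n)
    (hf : IsIndepBroadcast (circulantGraph n 3) f) :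
    3 * ∑ v, f v ≤ n + #(broadcastSupport f) := by
  have := card_le_univ (arcCover f)
  rw [Fintype.card_fin] at this
  have := hf.card_arcCover_add_card hn
  omega

lemma IsIndepBroadcast.sub_one_notMem_arcCover (hn : 6 ≤ n)
    (hf : IsIndepBroadcast (circulantGraph n 3) f) {w : Fin n} (hmax : ∀ u ≠ w, f u < f w) :
    w - 1 ∉ arcCover f := by
  intro hmem
  obtain ⟨v, hv, hx⟩ := mem_biUnion.mp hmem
  obtain ⟨i, hi, hvi⟩ := mem_arc.mp hx
  have hw : w = v + (i + 1 : ℕ) := by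
    push_cast
    linear_combination -hvi
  by_cases hvw : v = w
  · subst hvw
    have := hf.three_mul_le hn v
    exact v.self_ne_add_natCast (Nat.succ_pos i) (by omega) hw
  · have hfv := hmax v hvw
    have := hf.max_lt_of_eq_add (by omega) hv (mem_broadcastSupport.mpr (by omega)) hvw hw
    omega

lemma IsIndepBroadcast.three_mul_sum_lt (hn : 6 ≤ n)
    (hf : IsIndepBroadcast (circulantGraph n 3) f) {w : Fin n} (hmax : ∀ u ≠ w, f u < f w) :
    3 * ∑ v, f v < n + #(broadcastSupport f) := by
  have := card_lt_univ_of_notMem (hf.sub_one_notMem_arcCover hn hmax)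
  rw [Fintype.card_fin] at this
  have := hf.card_arcCover_add_card hn
  omega

lemma circulantGraph_two_mul_card_add_three_le (hn : 4 ≤ n) (hodd : Odd n)
    {s : Finset (Fin n)} (hs : ∀ u ∈ s, ∀ v ∈ s, ¬ (circulantGraph n 3).Adj u v) :
    2 * #s + 3 ≤ n := by
  set t := s.image (· + 1)
  have hdisj : Disjoint s t := disjoint_right.mpr fun x hxt hxs => by
    obtain ⟨y, hy, rfl⟩ := mem_image.mp hxt
    exact hs y hy _ hxs (circulantGraph_adj_add_one (by omega) 3 y)
  have hcard : #(s ∪ t) = 2 * #s := by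
    rw [card_union_of_disjoint hdisj, card_image_of_injective _ (add_left_injective 1)]
    ring
  have hle := card_le_univ (s ∪ t)
  rw [Fintype.card_fin] at hle
  have hodd' := Nat.odd_iff.mp hodd
  by_contra hlt
  obtain ⟨u, -, hu⟩ := exists_mem_notMem_of_card_lt_card (s := s ∪ t) (t := univ)
    (by rw [card_univ, Fintype.card_fin]; omega)
  have hcover : ∀ x ≠ u, x ∈ s ∪ t := by
    have huniv := eq_univ_of_card (insert u (s ∪ t))
      (by rw [card_insert_of_notMem hu, Fintype.card_fin]; omega)
    exact fun x hx => (mem_insert.mp (huniv ▸ mem_univ x)).resolve_left hx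
  have hne : u ≠ u + 1 := by simpa using u.self_ne_add_natCast one_pos (by omega)
  have hsucc : u + 1 ∈ s := by
    refine (mem_union.mp (hcover _ hne.symm)).resolve_right fun h => hu ?_
    obtain ⟨y, hy, hyu⟩ := mem_image.mp h
    exact mem_union_left _ (add_right_cancel hyu ▸ hy)
  have hpred : u - 2 ∈ s := by
    have hu1 : u - 1 ≠ u := fun h => hne (by linear_combination h)
    refine (mem_union.mp (hcover _ hu1)).elim (fun h => absurd ?_ hu) fun h => ?_
    · exact mem_union_right _ (mem_image.mpr ⟨_, h, by ring⟩)
    · obtain ⟨y, hy, hyu⟩ := mem_image.mp h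
      rwa [show y = u - 2 by linear_combination hyu] at hy
  have hadj := circulantGraph_adj_add (a := 3) (by norm_num) (by omega) (u - 2)
  exact hs _ hpred _ hsucc (by convert hadj using 1; push_cast; ring)

def evenVertices (n k : ℕ) [NeZero n] : Finset (Fin n) :=
  (range k).image fun i : ℕ => ((2 * i : ℕ) : Fin n)

lemma card_evenVertices {k : ℕ} (hk : 2 * k ≤ n + 1) : #(evenVertices n k) = k := by
  rw [evenVertices, card_image_of_injOn, card_range]
  intro i hi j hj hij
  simp only [coe_range, Set.mem_Iio] at hi hj
  have := Fin.eq_of_natCast_eq_of_lt (by omega) (by omega) hij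
  omega

lemma evenVertices_indep (hn : 4 ≤ n) {k : ℕ}
    (hk : Even n ∧ 2 * k ≤ n ∨ 2 * k + 3 ≤ n) :
    ∀ u ∈ evenVertices n k, ∀ v ∈ evenVertices n k, ¬ (circulantGraph n 3).Adj u v := by
  have key : ∀ a < k, ∀ b < k, ∀ c : ℕ, (c = 1 ∨ c = 3) →
      ((2 * b : ℕ) : Fin n) ≠ ((2 * a : ℕ) : Fin n) + (c : ℕ) := by
    intro a ha b hb c hc h
    have hval : ∀ m < k, (((2 * m : ℕ) : Fin n) : ℕ) = 2 * m := fun m hm =>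
      by rw [Fin.val_natCast, Nat.mod_eq_of_lt (by omega)]
    have := Fin.val_add_natCast_eq_or ((2 * a : ℕ) : Fin n) (c := c) (by omega)
    rw [← h, hval a ha, hval b hb] at this
    rcases hk with ⟨⟨m, rfl⟩, -⟩ | hk <;> omega
  simp only [evenVertices, mem_image, mem_range]
  rintro _ ⟨i, hi, rfl⟩ _ ⟨j, hj, rfl⟩ hadj
  obtain ⟨-, h | h | h | h⟩ := (circulantGraph_adj_iff 3 _ _).mp hadj
  · exact key i hi j hj 1 (.inl rfl) (by simpa using h)
  · exact key i hi j hj 3 (.inr rfl) h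
  · exact key j hj i hi 1 (.inl rfl) (by simpa using h)
  · exact key j hj i hi 3 (.inr rfl) h

lemma IsIndepBroadcast.two_mul_sum_le (hn : 6 ≤ n)
    (hf : IsIndepBroadcast (circulantGraph n 3) f) : 2 * ∑ v, f v ≤ n := by
  have := hf.three_mul_sum_le hn
  have := sum_eq_card_broadcastSupport_add f
  omega

lemma IsIndepBroadcast.two_mul_sum_add_three_le (hn : 6 ≤ n) (hodd : Odd n)
    (hf : IsIndepBroadcast (circulantGraph n 3) f) : 2 * ∑ v, f v + 3 ≤ n := by
  obtain ⟨w, -, hw⟩ := exists_max_image univ f univ_nonempty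
  have hsum := sum_eq_card_broadcastSupport_add f
  have hcover := hf.three_mul_sum_le hn
  have hodd' := Nat.odd_iff.mp hodd
  rcases le_or_gt (f w) 1 with hle | hgt
  · have := circulantGraph_two_mul_card_add_three_le (by omega) hodd
      fun u hu v hv => hf.not_adj hu hv
    have : ∑ v, (f v - 1) = 0 := sum_eq_zero fun v _ => by have := hw v (mem_univ v); omega
    omega
  by_cases hstrict : ∀ u ≠ w, f u < f w
  · have := hf.three_mul_sum_lt hn hstrict
    have : f w - 1 ≤ ∑ v, (f v - 1) :=
      single_le_sum (f := (f · - 1)) (fun _ _ => Nat.zero_le _) (mem_univ w)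
    omega
  · obtain ⟨u, huw, hu⟩ : ∃ u ≠ w, f w ≤ f u := by simpa using hstrict
    have : (f u - 1) + (f w - 1) ≤ ∑ v, (f v - 1) := by
      rw [← sum_pair (f := (f · - 1)) huw]
      exact sum_le_sum_of_subset (subset_univ _)
    omega

end Circulant

theorem stmt17 (n : ℕ) (hn : 6 ≤ n) :
    (Even n → betaB (circulantGraph n 3) = n / 2 ∧
      alphaNum (circulantGraph n 3) = n / 2) ∧
    (Odd n → betaB (circulantGraph n 3) = (n - 3) / 2 ∧
      alphaNum (circulantGraph n 3) = (n - 3) / 2) := by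
  have : NeZero n := ⟨by omega⟩
  have : Nontrivial (Fin n) := Fin.nontrivial_iff_two_le.mpr (by omega)
  have hG := circulantGraph_connected (n := n) (by omega) 3
  refine ⟨fun heven => ?_, fun hodd => ?_⟩
  · exact betaB_eq_and_alphaNum_eq hG (fun f hf => by have := hf.two_mul_sum_le hn; omega)
      (evenVertices_indep (by omega) (.inl ⟨heven, by omega⟩)) (card_evenVertices (by omega))
  · exact betaB_eq_and_alphaNum_eq hG
      (fun f hf => by have := hf.two_mul_sum_add_three_le hn hodd; omega)
      (evenVertices_indep (by omega) (.inr (by omega))) (card_evenVertices (by omega))
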